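/- Let G = (V, E) be a finite directed graph with a distinguished vertex v and |V| = n. Build the data-graph G₀ with the same vertices and a single edge label 'down' on each edge of E, and constant data function D(z) = 0 (with Σ_n = ℕ). Then there exists a data function D' : V → ℕ such that the data-graph (V, E-with-down-labels, D') satisfies at v the node expression ⟨[=1]·down·[=2]·down·[=3]·…·down·[=n]⟩ if and only if G has a Hamiltonian path starting at v. -/

import Mathlib

/-!
A witness of `⟨[=k]·down·[=k+1]·…·down·[=k+j]⟩` is a walk along `down`-edges whose `i`-th node
carries the data value `k + i`. These values are pairwise distinct, so the walk never revisits a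
node and, with `n` nodes, is a Hamiltonian path. Conversely, numbering the nodes of a Hamiltonian
path in order gives a data function for which the path is a witness.
-/

/-- A data-graph: a set of nodes (natural numbers), a set of labeled directed edges,
and a data function assigning a data value to each node. -/
structure DataGraph (σe σn : Type) where
  V : Set ℕ
  E : Set (ℕ × σe × ℕ)
  D : ℕ → σn

/- Syntax of the positive fragment of regular XPath (GXPath-pos): path expressions and
node expressions, without path complement or node negation. -/
mutual
inductive PathExpr (σe σn : Type) where
  | eps : PathExpr σe σn
  | label : σe → PathExpr σe σn
  | inv : σe → PathExpr σe σn
  | test : NodeExpr σe σn → PathExpr σe σn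
  | concat : PathExpr σe σn → PathExpr σe σn → PathExpr σe σn
  | union : PathExpr σe σn → PathExpr σe σn → PathExpr σe σn
  | inter : PathExpr σe σn → PathExpr σe σn → PathExpr σe σn
  | star : PathExpr σe σn → PathExpr σe σn

inductive NodeExpr (σe σn : Type) where
  | eq : σn → NodeExpr σe σn
  | ne : σn → NodeExpr σe σn
  | and : NodeExpr σe σn → NodeExpr σe σn → NodeExpr σe σn
  | or : NodeExpr σe σn → NodeExpr σe σn → NodeExpr σe σn
  | ex : PathExpr σe σn → NodeExpr σe σn
  | exEq : PathExpr σe σn → PathExpr σe σn → NodeExpr σe σn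
  | exNe : PathExpr σe σn → PathExpr σe σn → NodeExpr σe σn
end

/- Semantics of GXPath-pos over a data-graph. -/
mutual
def pathSem {σe σn : Type} (G : DataGraph σe σn) : PathExpr σe σn → ℕ → ℕ → Prop
  | .eps, v, w => v = w ∧ v ∈ G.V
  | .label a, v, w => (v, a, w) ∈ G.E
  | .inv a, v, w => (w, a, v) ∈ G.E
  | .test ν, v, w => v = w ∧ nodeSem G ν v
  | .concat α β, v, w => ∃ u, pathSem G α v u ∧ pathSem G β u w
  | .union α β, v, w => pathSem G α v w ∨ pathSem G β v w
  | .inter α β, v, w => pathSem G α v w ∧ pathSem G β v w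
  | .star α, v, w => v ∈ G.V ∧ w ∈ G.V ∧
      Relation.ReflTransGen (fun x y => pathSem G α x y) v w

def nodeSem {σe σn : Type} (G : DataGraph σe σn) : NodeExpr σe σn → ℕ → Prop
  | .eq c, v => v ∈ G.V ∧ G.D v = c
  | .ne c, v => v ∈ G.V ∧ G.D v ≠ c
  | .and ν ν', v => nodeSem G ν v ∧ nodeSem G ν' v
  | .or ν ν', v => nodeSem G ν v ∨ nodeSem G ν' v
  | .ex α, v => ∃ w, pathSem G α v w
  | .exEq α β, v => ∃ w u, pathSem G α v w ∧ pathSem G β v u ∧ G.D w = G.D u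
  | .exNe α β, v => ∃ w u, pathSem G α v w ∧ pathSem G β v u ∧ G.D w ≠ G.D u
end

/-- `chainAux j k` is the path expression `[=k]·down·[=k+1]·…·down·[=k+j]`, so that
`chainAux (n-1) 1` is `[=1]·down·[=2]·…·down·[=n]` (the single edge label `down` is `()`). -/
def chainAux : ℕ → ℕ → PathExpr Unit ℕ
  | 0, k => .test (.eq k)
  | j + 1, k => .concat (.test (.eq k)) (.concat (.label ()) (chainAux j (k + 1)))

theorem List.Nodup.exists_map_eq_range' {α : Type*} [DecidableEq α] {l : List α} (hl : l.Nodup)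
    (k : ℕ) : ∃ D : α → ℕ, l.map D = List.range' k l.length := by
  induction l generalizing k with
  | nil => exact ⟨fun _ => 0, rfl⟩
  | cons x t ih =>
    obtain ⟨hx, ht⟩ := List.nodup_cons.mp hl
    obtain ⟨D, hD⟩ := ih ht (k + 1)
    refine ⟨Function.update D x k, ?_⟩
    have : t.map (Function.update D x k) = t.map D :=
      List.map_congr_left fun y hy => Function.update_of_ne (ne_of_mem_of_not_mem hy hx) _ _
    simp [List.range'_succ, this, hD]

theorem nodeSem_ex_chainAux_iff (G : DataGraph Unit ℕ) (j k a : ℕ) :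
    nodeSem G (.ex (chainAux j k)) a ↔
      ∃ l : List ℕ, l.head? = some a ∧ l.IsChain (fun x y => (x, (), y) ∈ G.E) ∧
        (∀ x ∈ l, x ∈ G.V) ∧ l.map G.D = List.range' k (j + 1) := by
  induction j generalizing k a with
  | zero =>
    simp only [nodeSem, chainAux, pathSem, List.range'_succ, List.range'_zero, List.map_eq_cons_iff,
      List.map_eq_nil_iff]
    constructor
    · rintro ⟨_, rfl, haV, haD⟩
      exact ⟨[a], rfl, List.isChain_singleton a, by simpa using haV, a, [], rfl, haD, rfl⟩
    · rintro ⟨_, hhead, -, hV, x, _, rfl, hxD, rfl⟩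
      obtain rfl : x = a := by simpa using hhead
      exact ⟨x, rfl, hV x (by simp), hxD⟩
  | succ j ih =>
    rw [List.range'_succ]
    simp only [nodeSem, chainAux, pathSem] at ih ⊢
    constructor
    · rintro ⟨b, _, ⟨rfl, haV, haD⟩, c, hac, hc⟩
      obtain ⟨l, hhead, hchain, hV, hD⟩ := (ih (k + 1) c).mp ⟨b, hc⟩
      refine ⟨a :: l, rfl, ?_, ?_, by simp [haD, hD]⟩
      · obtain ⟨l', rfl⟩ := List.head?_eq_some_iff.mp hhead
        exact List.isChain_cons_cons.mpr ⟨hac, hchain⟩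
      · simpa [haV] using hV
    · rintro ⟨_, hhead, hchain, hV, hD⟩
      obtain ⟨x, l, rfl, hxD, hlD⟩ := List.map_eq_cons_iff.mp hD
      obtain rfl : x = a := by simpa using hhead
      obtain ⟨c, l', rfl, -⟩ := List.map_eq_cons_iff.mp (hlD.trans List.range'_succ)
      obtain ⟨hac, hchain⟩ := List.isChain_cons_cons.mp hchain
      obtain ⟨b, hb⟩ :=
        (ih (k + 1) c).mpr ⟨c :: l', rfl, hchain, fun y hy => hV y (by simp [hy]), hlD⟩
      exact ⟨b, x, ⟨rfl, hV x (by simp), hxD⟩, c, hac, hb⟩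

/-- Let `(V, E)` be a finite directed graph on `Fin n` with distinguished
vertex `v`.  Build the data-graph on nodes `{0,…,n−1}` whose `down`-edges are the edges of
`E`.  Then some data function `D' : ℕ → ℕ` makes the node expression
`⟨[=1]·down·[=2]·…·down·[=n]⟩` hold at `v` iff the graph has a Hamiltonian path starting
at `v`. -/
theorem stmt_19 (n : ℕ) (hn : 0 < n) (E : Fin n → Fin n → Prop) (v : Fin n) :
    (∃ D' : ℕ → ℕ,
      nodeSem
        ⟨{k | k < n},
         {e | ∃ x y : Fin n, E x y ∧ e = (x.val, (), y.val)},
         D'⟩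
        (.ex (chainAux (n - 1) 1)) v.val) ↔
    (∃ l : List (Fin n), l.Nodup ∧ l.length = n ∧ l.head? = some v ∧
      l.Chain' (fun x y => E x y)) := by
  have hedge : ∀ x y : Fin n,
      (x.val, (), y.val) ∈ {e | ∃ x y : Fin n, E x y ∧ e = (x.val, (), y.val)} ↔ E x y := by
    simp [Fin.val_inj]
  simp only [nodeSem_ex_chainAux_iff, Nat.sub_add_cancel hn]
  constructor
  · rintro ⟨D', l, hhead, hchain, hV, hD⟩
    lift l to List (Fin n) using hV
    refine ⟨l, ?_, ?_, ?_, ?_⟩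
    · have hnd : (List.range' 1 n).Nodup := List.nodup_range'
      rw [← hD] at hnd
      exact (hnd.of_map _).of_map _
    · simpa using congrArg List.length hD
    · simpa [Fin.val_inj] using hhead
    · exact ((List.isChain_map Fin.val).mp hchain).imp fun x y => (hedge x y).mp
  · rintro ⟨l, hnd, hlen, hhead, hchain⟩
    obtain ⟨D', hD'⟩ := (hnd.map Fin.val_injective).exists_map_eq_range' 1
    refine ⟨D', l.map Fin.val, by simp [hhead], ?_, by simp, by simpa [hlen] using hD'⟩
    exact (List.isChain_map Fin.val).mpr (hchain.imp fun x y => (hedge x y).mpr)
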